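/- arXiv:1708.06256 — 2 statements merged into one kernel-verified Lean document; each statement's English description precedes it below -/
import Mathlib

section
/- Let G(x) be the n×n matrix with entries G(x)ᵢⱼ = δᵢⱼ/xⱼ + hᵢⱼ(x), defined for x in the positive orthant (0,∞)ⁿ, where H = (hᵢⱼ(x)) is a symmetric matrix of functions that remain bounded as x → 0. Then the cofactor Cof(G(x))ᵢⱼ satisfies Cof(G(x))ᵢⱼ · x₁⋯xₙ → 0 as x → 0 in the positive orthant, for every i, j. -/
open Matrix Filter Topology

/-!
Factor `G(x) = diag(x)⁻¹ (1 + diag(x) H(x))`. Since `adj(AB) = adj(B) adj(A)` and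
`adj(diag(x)⁻¹) = (x₁⋯xₙ)⁻¹ diag(x)`, this gives
`x₁⋯xₙ · adj(G(x))ⱼᵢ = xᵢ · adj(1 + diag(x) H(x))ⱼᵢ`. As `x → 0` the matrix
`1 + diag(x) H(x)` tends to `1` because `H` stays bounded, so by continuity of the adjugate
the right-hand side tends to `0 · adj(1)ⱼᵢ = 0`.
-/

namespace Matrix

variable {ι : Type*} [Fintype ι] [DecidableEq ι]

theorem diagonal_inv_add_eq_diagonal_inv_mul {K : Type*} [Field K] {x : ι → K}
    (hx : ∀ k, x k ≠ 0) (N : Matrix ι ι K) :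
    diagonal x⁻¹ + N = diagonal x⁻¹ * (1 + diagonal x * N) := by
  have hinv : (fun k => x⁻¹ k * x k) = fun _ => 1 := funext fun k => inv_mul_cancel₀ (hx k)
  rw [Matrix.mul_add, Matrix.mul_one, ← Matrix.mul_assoc, diagonal_mul_diagonal, hinv,
    diagonal_one, Matrix.one_mul]

theorem prod_mul_adjugate_diagonal_inv_add_apply {K : Type*} [Field K] {x : ι → K}
    (hx : ∀ k, x k ≠ 0) (N : Matrix ι ι K) (i j : ι) :
    (∏ k, x k) * adjugate (diagonal x⁻¹ + N) j i = x i * adjugate (1 + diagonal x * N) j i := by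
  have hprod : (∏ k, x k) * ∏ k ∈ Finset.univ.erase i, x⁻¹ k = x i := by
    rw [← Finset.mul_prod_erase _ x (Finset.mem_univ i), mul_assoc, ← Finset.prod_mul_distrib,
      Finset.prod_eq_one fun k _ => by simp [hx k], mul_one]
  rw [diagonal_inv_add_eq_diagonal_inv_mul hx, adjugate_mul_distrib, adjugate_diagonal,
    mul_diagonal, mul_left_comm, hprod, mul_comm]

theorem tendsto_one_add_diagonal_mul {𝕜 α : Type*} [NormedRing 𝕜] {l : Filter α}
    {x : α → ι → 𝕜} {N : α → Matrix ι ι 𝕜} (hx : Tendsto x l (𝓝 0))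
    (hN : ∀ a b, IsBoundedUnder (· ≤ ·) l fun t => ‖N t a b‖) :
    Tendsto (fun t => 1 + diagonal (x t) * N t) l (𝓝 1) := by
  have hprod : Tendsto (fun t => diagonal (x t) * N t) l (𝓝 0) := by
    refine tendsto_pi_nhds.2 fun a => tendsto_pi_nhds.2 fun b => ?_
    simp only [diagonal_mul]
    exact (((continuous_apply a).tendsto 0).comp hx).zero_mul_isBoundedUnder_le (hN a b)
  simpa using tendsto_const_nhds.add hprod

end Matrix

theorem stmt3_general (n : ℕ) (h : (Fin n → ℝ) → Matrix (Fin n) (Fin n) ℝ)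
    (hbdd : ∀ i j, ∃ C > 0, ∃ ε > 0, ∀ x : Fin n → ℝ, (∀ k, 0 < x k) → ‖x‖ < ε →
      |h x i j| ≤ C)
    (G : (Fin n → ℝ) → Matrix (Fin n) (Fin n) ℝ)
    (hG : ∀ x i j, G x i j = (if i = j then 1 / x j else 0) + h x i j) :
    ∀ i j, Tendsto (fun x : Fin n → ℝ => (∏ k, x k) * (Matrix.adjugate (G x)) j i)
      (nhdsWithin 0 {x : Fin n → ℝ | ∀ k, 0 < x k}) (nhds 0) := by
  intro i j
  set F := nhdsWithin (0 : Fin n → ℝ) {x : Fin n → ℝ | ∀ k, 0 < x k}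
  have hF : Tendsto id F (𝓝 0) := nhdsWithin_le_nhds
  have hbddF : ∀ a b, IsBoundedUnder (· ≤ ·) F fun x => ‖h x a b‖ := by
    intro a b
    obtain ⟨C, -, ε, hε, hC⟩ := hbdd a b
    refine ⟨C, eventually_map.2 ?_⟩
    filter_upwards [self_mem_nhdsWithin, nhdsWithin_le_nhds (Metric.ball_mem_nhds 0 hε)]
      with x hx hxε
    exact hC x hx (mem_ball_zero_iff.1 hxε)
  have hadj : Tendsto (fun x => adjugate (1 + diagonal x * h x) j i) F (𝓝 (adjugate 1 j i)) :=
    (((continuous_apply_apply j i).comp continuous_id.matrix_adjugate).tendsto 1).comp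
      (tendsto_one_add_diagonal_mul hF hbddF)
  have hlim : Tendsto (fun x => x i * adjugate (1 + diagonal x * h x) j i) F (𝓝 0) := by
    simpa using (((continuous_apply i).tendsto 0).comp hF).mul hadj
  refine hlim.congr' ?_
  filter_upwards [self_mem_nhdsWithin] with x hx
  have hGx : G x = diagonal x⁻¹ + h x := by
    ext a b
    by_cases hab : a = b <;> simp [hG, hab]
  rw [hGx, prod_mul_adjugate_diagonal_inv_add_apply fun k => (hx k).ne']

/-- For `G(x)ᵢⱼ = δᵢⱼ/xⱼ + hᵢⱼ(x)` on the positive orthant, with `h` symmetric and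
bounded near `0`, the cofactors satisfy `x₁⋯xₙ · Cof(G(x))ᵢⱼ → 0` as `x → 0` in the
orthant.  (The cofactor matrix is the transpose of the adjugate: `Cof(A)ᵢⱼ = adjugate A j i`.) -/
theorem stmt3 (n : ℕ) (h : (Fin n → ℝ) → Matrix (Fin n) (Fin n) ℝ)
    (hsymm : ∀ x i j, h x i j = h x j i)
    (hbdd : ∀ i j, ∃ C > 0, ∃ ε > 0, ∀ x : Fin n → ℝ, (∀ k, 0 < x k) → ‖x‖ < ε →
      |h x i j| ≤ C)
    (G : (Fin n → ℝ) → Matrix (Fin n) (Fin n) ℝ)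
    (hG : ∀ x i j, G x i j = (if i = j then 1 / x j else 0) + h x i j) :
    ∀ i j, Tendsto (fun x : Fin n → ℝ => (∏ k, x k) * (Matrix.adjugate (G x)) j i)
      (nhdsWithin 0 {x : Fin n → ℝ | ∀ k, 0 < x k}) (nhds 0) :=
  stmt3_general n h hbdd G hG
end

section
/- Let g : (0,∞)ⁿ → ℝ be g(x) = (1/2)(∑ᵢ₌₁ⁿ xᵢ log xᵢ) + (1/2)h̃(x), where h̃ is C² on a neighborhood of 0 in ℝⁿ. Then for all i, j, the (i,j) cofactor of the Hessian G(x) of g satisfies x₁⋯xₙ · Cof(G(x))ᵢⱼ → 0 as x → 0 within (0,∞)ⁿ when i ≠ j, and x₁⋯xₙ · Cof(G(x))ᵢᵢ = O(xᵢ) as x → 0. -/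
open Matrix Filter Topology

/-! Multiplying `G(x)` on the right by `diag(x)` (which contributes the factor `x₁⋯xₙ`)
turns it into `½ I + ½ ∇²h̃(x) diag(x)`, which converges as `x → 0`. Since
`x₁⋯xₙ · Cof(G)ᵢⱼ = xⱼ · det` of this matrix with row `i` replaced by `eⱼ`, the scaled cofactor
is `xⱼ` times a convergent quantity: it is `O(xᵢ)` on the diagonal and tends to `0` off it. -/

theorem Matrix.prod_mul_adjugate_apply {ι : Type*} [Fintype ι] [DecidableEq ι]
    (A : Matrix ι ι ℝ) (x : ι → ℝ) (i j : ι) :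
    (∏ k, x k) * adjugate A j i = x j * ((A * diagonal x).updateRow i (Pi.single j 1)).det := by
  rw [adjugate_apply, ← det_diagonal, mul_comm, ← det_mul, updateRow_mul, single_vecMul_diagonal,
    one_mul, ← det_updateRow_smul, ← Pi.single_smul', smul_eq_mul, mul_one]

theorem ContDiffOn.continuousOn_fderiv_fderiv_apply {E : Type*} [NormedAddCommGroup E]
    [NormedSpace ℝ E] {f : E → ℝ} {U : Set E} (hU : IsOpen U) (hf : ContDiffOn ℝ 2 f U)
    (v w : E) : ContinuousOn (fun x => fderiv ℝ (fun y => fderiv ℝ f y v) x w) U := by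
  have hfv : ContDiffOn ℝ 1 (fun y => fderiv ℝ f y v) U :=
    (hf.fderiv_of_isOpen hU (by norm_num)).clm_apply contDiffOn_const
  exact ((hfv.fderiv_of_isOpen (m := 0) hU le_rfl).clm_apply contDiffOn_const).continuousOn

theorem Filter.Tendsto.exists_abs_le_of_nhdsWithin_zero {E : Type*} [SeminormedAddCommGroup E]
    {s : Set E} {f : E → ℝ} {c : ℝ} (hf : Tendsto f (𝓝[s] 0) (𝓝 c)) :
    ∃ C > 0, ∃ ε > 0, ∀ x ∈ s, ‖x‖ < ε → |f x| ≤ C := by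
  obtain ⟨ε, hε, hball⟩ := Metric.mem_nhdsWithin_iff.1 (hf.abs.eventually_lt_const (lt_add_one |c|))
  refine ⟨|c| + 1, by positivity, ε, hε, fun x hxs hxε => (hball ⟨?_, hxs⟩).le⟩
  rwa [Metric.mem_ball, dist_zero_right]

theorem tendsto_mul_diagonal_of_inv_diagonal_add {ι : Type*} [Fintype ι] [DecidableEq ι]
    {G H : (ι → ℝ) → Matrix ι ι ℝ} (hH : ContinuousAt H 0)
    (hG : ∀ x, G x = diagonal (fun l => 1 / (2 * x l)) + (1 / 2 : ℝ) • H x) :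
    Tendsto (fun x => G x * diagonal x) (𝓝[{x | ∀ k, x k ≠ 0}] 0) (𝓝 ((1 / 2 : ℝ) • 1)) := by
  have hlim : Tendsto (fun x => (1 / 2 : ℝ) • 1 + (1 / 2 : ℝ) • (H x * diagonal x)) (𝓝 0)
      (𝓝 ((1 / 2 : ℝ) • 1)) := by
    have hHx : Tendsto (fun x => H x * diagonal x) (𝓝 0) (𝓝 (H 0 * diagonal 0)) :=
      hH.tendsto.mul (continuous_id.matrix_diagonal.tendsto 0)
    simpa using tendsto_const_nhds.add (hHx.const_smul (1 / 2 : ℝ))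
  refine (hlim.mono_left nhdsWithin_le_nhds).congr' (eventually_nhdsWithin_of_forall ?_)
  intro x hx
  dsimp only
  have hhalf : (fun l => 1 / (2 * x l) * x l) = (1 / 2 : ℝ) • fun _ => 1 := by
    ext l
    simp only [Pi.smul_apply, smul_eq_mul, mul_one]
    field_simp [hx l]
  rw [hG, add_mul, diagonal_mul_diagonal, hhalf, diagonal_smul, smul_mul_assoc]
  rfl

/-- Let `g(x) = (1/2)∑ xᵢ log xᵢ + (1/2) h̃(x)` with `h̃` C² near `0`, so that the Hessian
of `g` is `G(x)ᵢⱼ = δᵢⱼ/(2xⱼ) + (1/2) h̃ᵢⱼ(x)`.  Then `x₁⋯xₙ · Cof(G(x))ᵢⱼ → 0` as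
`x → 0` within the positive orthant for `i ≠ j`, and `x₁⋯xₙ · Cof(G(x))ᵢᵢ = O(xᵢ)`.
(`Cof(A)ᵢⱼ = adjugate A j i`.) -/
theorem stmt13 (n : ℕ) (h : (Fin n → ℝ) → ℝ) (U : Set (Fin n → ℝ))
    (hU : IsOpen U) (h0U : (0 : Fin n → ℝ) ∈ U) (hh : ContDiffOn ℝ 2 h U)
    (G : (Fin n → ℝ) → Matrix (Fin n) (Fin n) ℝ)
    (hG : ∀ x : Fin n → ℝ, ∀ i j, G x i j = (if i = j then 1 / (2 * x j) else 0) +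
      (1/2) * fderiv ℝ (fun y => fderiv ℝ h y (Pi.single j 1)) x (Pi.single i 1)) :
    ∀ i j,
      (i ≠ j → Tendsto (fun x : Fin n → ℝ => (∏ k, x k) * (Matrix.adjugate (G x)) j i)
        (nhdsWithin 0 {x : Fin n → ℝ | ∀ k, 0 < x k}) (nhds 0)) ∧
      (∃ C > 0, ∃ ε > 0, ∀ x : Fin n → ℝ, (∀ k, 0 < x k) → ‖x‖ < ε →
        |(∏ k, x k) * (Matrix.adjugate (G x)) i i| ≤ C * x i) := by
  set F := 𝓝[{x : Fin n → ℝ | ∀ k, 0 < x k}] (0 : Fin n → ℝ)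
  set H : (Fin n → ℝ) → Matrix (Fin n) (Fin n) ℝ := fun x => Matrix.of fun k l =>
    fderiv ℝ (fun y => fderiv ℝ h y (Pi.single l 1)) x (Pi.single k 1)
  have hH : ContinuousAt H 0 := continuousAt_pi.2 fun k => continuousAt_pi.2 fun l =>
    (hh.continuousOn_fderiv_fderiv_apply hU _ _).continuousAt (hU.mem_nhds h0U)
  have hGH : ∀ x, G x = diagonal (fun l => 1 / (2 * x l)) + (1 / 2 : ℝ) • H x := fun x => by
    ext k l
    rw [hG, Matrix.add_apply, diagonal_apply, Matrix.smul_apply, smul_eq_mul]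
    split_ifs with hkl
    · subst hkl
      rfl
    · rfl
  have hM : Tendsto (fun x => G x * diagonal x) F (𝓝 ((1 / 2 : ℝ) • 1)) :=
    (tendsto_mul_diagonal_of_inv_diagonal_add hH hGH).mono_left
      (nhdsWithin_mono _ fun x hx k => (hx k).ne')
  have hminor : ∀ i j, Tendsto (fun x => ((G x * diagonal x).updateRow i (Pi.single j 1)).det) F
      (𝓝 ((((1 / 2 : ℝ) • 1 : Matrix (Fin n) (Fin n) ℝ).updateRow i (Pi.single j 1)).det)) :=
    fun i j => ((continuous_id.matrix_updateRow i continuous_const).matrix_det.tendsto _).comp hM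
  intro i j
  refine ⟨fun _ => ?_, ?_⟩
  · have hxj : Tendsto (fun x : Fin n → ℝ => x j) F (𝓝 0) :=
      ((continuous_apply j).tendsto' 0 0 rfl).mono_left nhdsWithin_le_nhds
    simpa [prod_mul_adjugate_apply] using hxj.mul (hminor i j)
  · obtain ⟨C, hC, ε, hε, hbound⟩ := (hminor i i).exists_abs_le_of_nhdsWithin_zero
    refine ⟨C, hC, ε, hε, fun x hx hxε => ?_⟩
    rw [prod_mul_adjugate_apply, abs_mul, abs_of_pos (hx i), mul_comm C]
    exact mul_le_mul_of_nonneg_left (hbound x hx hxε) (hx i).le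
end
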